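/- Let S and T be balanced bitstrings. Then a unit of area (x,y) is between S and T if and only if (2x+y+1, x+y) is between w(S) and w(T). Consequently, the area between w(S) and w(T) equals the area between S and T. -/

import Mathlib

/-!
A prefix `P` of `S` with `a` zeros and `b` ones gives the prefix `w(P)` of `w(S)`, with `a + b`
ones and `2a + b` zeros; every other prefix of `w(S)` is such a `w(P)` followed by at most two
zeros of the next block. Hence, counting the ones `n` of a prefix of `w(S)`, witnesses for
`(2x + y + 1, x + y)` pull back to the prefixes of `S` of length `n` (below) or `n + 1` (above).
Conversely, a witness for `(x, y)` can be replaced by the prefix of `S` of length `x + y + 1`,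
which exists because `S` and `T` have the same numbers of zeros and ones; its image under `w`
(with the final `1` removed, for "above") is a witness for `(2x + y + 1, x + y)`. The map
`(x, y) ↦ (2x + y + 1, x + y)` is a bijection of `ℤ²`, so the areas agree.
-/

/-- The substitution `w`, simultaneously replacing each `0` by `001` and each
`1` by `01`. -/
def wsub (S : List Bool) : List Bool :=
  S.flatMap (fun b => if b then [false, true] else [false, false, true])

/-- Two bitstrings are balanced if they have the same length and the same
number of ones. -/
def BalancedBits (S T : List Bool) : Prop :=
  S.length = T.length ∧ S.count true = T.count true

/-- `(x, y)` is below `S` if some prefix of `S` has at most `x` zeros and at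
least `y + 1` ones. -/
def Below (S : List Bool) (x y : ℤ) : Prop :=
  ∃ n ≤ S.length, ((S.take n).count false : ℤ) ≤ x ∧ y + 1 ≤ ((S.take n).count true : ℤ)

/-- `(x, y)` is above `S` if some prefix of `S` has at most `y` ones and at
least `x + 1` zeros. -/
def Above (S : List Bool) (x y : ℤ) : Prop :=
  ∃ n ≤ S.length, ((S.take n).count true : ℤ) ≤ y ∧ x + 1 ≤ ((S.take n).count false : ℤ)

/-- `(x, y)` is between `S` and `T` if it is above one and below the other. -/
def Between (S T : List Bool) (x y : ℤ) : Prop :=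
  (Above S x y ∧ Below T x y) ∨ (Below S x y ∧ Above T x y)

open List

@[simp]
lemma wsub_nil : wsub [] = [] := rfl

@[simp]
lemma wsub_cons_true (S : List Bool) : wsub (true :: S) = false :: true :: wsub S := rfl

@[simp]
lemma wsub_cons_false (S : List Bool) : wsub (false :: S) = false :: false :: true :: wsub S := rfl

lemma wsub_append (S T : List Bool) : wsub (S ++ T) = wsub S ++ wsub T :=
  flatMap_append

lemma List.IsPrefix.wsub {p S : List Bool} (h : p <+: S) : wsub p <+: wsub S :=
  h.flatMap _

@[simp]
lemma count_true_wsub (S : List Bool) : (wsub S).count true = S.length := by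
  induction S with
  | nil => rfl
  | cons b S ih => cases b <;> simp [ih]

@[simp]
lemma count_false_wsub (S : List Bool) : (wsub S).count false = S.length + S.count false := by
  induction S with
  | nil => rfl
  | cons b S ih => cases b <;> simp [ih] <;> omega

lemma exists_wsub_eq_append_true {p : List Bool} (hp : p ≠ []) : ∃ q, wsub p = q ++ [true] := by
  obtain ⟨p, b, rfl⟩ := (eq_nil_or_concat p).resolve_left hp
  cases b
  · exact ⟨wsub p ++ [false, false], by simp [wsub_append]⟩
  · exact ⟨wsub p ++ [false], by simp [wsub_append]⟩

lemma count_false_wsub_take_le_and_le {q S : List Bool} (hq : q <+: wsub S) :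
    (wsub (S.take (q.count true))).count false ≤ q.count false ∧
      q.count false ≤ (wsub (S.take (q.count true + 1))).count false := by
  induction S generalizing q with
  | nil => simp_all
  | cons b S ih =>
    cases b <;> simp only [wsub_cons_true, wsub_cons_false, prefix_cons_iff] at hq
    · obtain rfl | ⟨_, rfl, rfl | ⟨_, rfl, rfl | ⟨r, rfl, hr⟩⟩⟩ := hq
      iterate 3 · simp
      simpa using ih hr
    · obtain rfl | ⟨_, rfl, rfl | ⟨r, rfl, hr⟩⟩ := hq
      iterate 2 · simp
      simpa using ih hr

section

variable {S T : List Bool} {x y : ℤ}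

lemma below_iff_exists_prefix :
    Below S x y ↔
      ∃ p, p <+: S ∧ (p.count false : ℤ) ≤ x ∧ y + 1 ≤ (p.count true : ℤ) := by
  constructor
  · rintro ⟨n, -, hzeros, hones⟩
    exact ⟨S.take n, take_prefix n S, hzeros, hones⟩
  · rintro ⟨p, hp, hzeros, hones⟩
    have hp_eq := prefix_iff_eq_take.1 hp
    exact ⟨p.length, hp.length_le, by rwa [← hp_eq], by rwa [← hp_eq]⟩

lemma above_iff_exists_prefix :
    Above S x y ↔
      ∃ p, p <+: S ∧ (p.count true : ℤ) ≤ y ∧ x + 1 ≤ (p.count false : ℤ) := by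
  constructor
  · rintro ⟨n, -, hones, hzeros⟩
    exact ⟨S.take n, take_prefix n S, hones, hzeros⟩
  · rintro ⟨p, hp, hones, hzeros⟩
    have hp_eq := prefix_iff_eq_take.1 hp
    exact ⟨p.length, hp.length_le, by rwa [← hp_eq], by rwa [← hp_eq]⟩

lemma Below.nonneg (h : Below T x y) : 0 ≤ x := by
  obtain ⟨n, -, hzeros, -⟩ := h
  omega

lemma Above.nonneg (h : Above S x y) : 0 ≤ y := by
  obtain ⟨n, -, hones, -⟩ := h
  omega

lemma Below.lt_count_true (h : Below T x y) : y < T.count true := by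
  obtain ⟨n, -, -, hones⟩ := h
  have := (take_prefix n T).count_le true
  omega

lemma Above.lt_count_false (h : Above S x y) : x < S.count false := by
  obtain ⟨n, -, -, hzeros⟩ := h
  have := (take_prefix n S).count_le false
  omega

lemma Below.exists_prefix_length (h : Below T x y) (hy : 0 ≤ y) (hT : x < T.count false) :
    ∃ p, p <+: T ∧ (p.length : ℤ) = x + y + 1 ∧ (p.count false : ℤ) ≤ x := by
  have hones := h.lt_count_true
  obtain ⟨n, -, hzeros, hones_n⟩ := h
  obtain ⟨N, hN⟩ : ∃ N : ℕ, (N : ℤ) = x + y + 1 := ⟨(x + y + 1).toNat, by omega⟩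
  have hNT : N ≤ T.length := by
    have := count_false_add_count_true T
    omega
  refine ⟨T.take N, take_prefix N T, by simp [hNT, hN], ?_⟩
  rcases le_total N n with hNn | hnN
  · have := (take_prefix_take_left (l := T) hNn).count_le false
    omega
  · have := (take_prefix_take_left (l := T) hnN).count_le true
    have := count_false_add_count_true (T.take N)
    rw [length_take_of_le hNT] at this
    omega

lemma Above.exists_prefix_length (h : Above S x y) (hx : 0 ≤ x) (hS : y < S.count true) :
    ∃ p, p <+: S ∧ (p.length : ℤ) = x + y + 1 ∧ x + 1 ≤ (p.count false : ℤ) := by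
  have hzeros := h.lt_count_false
  obtain ⟨n, -, hones_n, hzeros_n⟩ := h
  obtain ⟨N, hN⟩ : ∃ N : ℕ, (N : ℤ) = x + y + 1 := ⟨(x + y + 1).toNat, by omega⟩
  have hNS : N ≤ S.length := by
    have := count_false_add_count_true S
    omega
  refine ⟨S.take N, take_prefix N S, by simp [hNS, hN], ?_⟩
  rcases le_total n N with hnN | hNn
  · have := (take_prefix_take_left (l := S) hnN).count_le false
    omega
  · have := (take_prefix_take_left (l := S) hNn).count_le true
    have := count_false_add_count_true (S.take N)
    rw [length_take_of_le hNS] at this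
    omega

lemma Below.of_wsub (h : Below (wsub T) (2 * x + y + 1) (x + y)) : Below T x y := by
  obtain ⟨q, hq, hzeros, hones⟩ := below_iff_exists_prefix.1 h
  have hn : q.count true ≤ T.length := count_true_wsub T ▸ hq.count_le true
  have hlow := (count_false_wsub_take_le_and_le hq).1
  have hsum := count_false_add_count_true (T.take (q.count true))
  rw [count_false_wsub, length_take_of_le hn] at hlow
  rw [length_take_of_le hn] at hsum
  exact below_iff_exists_prefix.2 ⟨T.take (q.count true), take_prefix _ T, by omega, by omega⟩

lemma Above.of_wsub (h : Above (wsub S) (2 * x + y + 1) (x + y)) : Above S x y := by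
  obtain ⟨q, hq, hones, hzeros⟩ := above_iff_exists_prefix.1 h
  have hup := (count_false_wsub_take_le_and_le hq).2
  have hlen := length_take_le (q.count true + 1) S
  have hsum := count_false_add_count_true (S.take (q.count true + 1))
  rw [count_false_wsub] at hup
  exact above_iff_exists_prefix.2
    ⟨S.take (q.count true + 1), take_prefix _ S, by omega, by omega⟩

lemma Below.to_wsub (h : Below T x y) (hy : 0 ≤ y) (hT : x < T.count false) :
    Below (wsub T) (2 * x + y + 1) (x + y) := by
  obtain ⟨p, hp, hlen, hzeros⟩ := h.exists_prefix_length hy hT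
  exact below_iff_exists_prefix.2
    ⟨wsub p, hp.wsub, by rw [count_false_wsub]; omega, by rw [count_true_wsub]; omega⟩

lemma Above.to_wsub (h : Above S x y) (hx : 0 ≤ x) (hS : y < S.count true) :
    Above (wsub S) (2 * x + y + 1) (x + y) := by
  obtain ⟨p, hp, hlen, hzeros⟩ := h.exists_prefix_length hx hS
  have hp_ne : p ≠ [] := ne_nil_of_length_pos (by have := h.nonneg; omega)
  obtain ⟨q, hq⟩ := exists_wsub_eq_append_true hp_ne
  have hones : p.length = q.count true + 1 := by simpa using congrArg (count true) hq
  have hzeros' : p.length + p.count false = q.count false := by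
    simpa using congrArg (count false) hq
  exact above_iff_exists_prefix.2
    ⟨q, (prefix_append q [true]).trans (hq ▸ hp.wsub), by omega, by omega⟩

lemma BalancedBits.symm (h : BalancedBits S T) : BalancedBits T S :=
  ⟨h.1.symm, h.2.symm⟩

lemma BalancedBits.count_false_eq (h : BalancedBits S T) :
    S.count false = T.count false :=
  Nat.add_right_cancel (m := S.count true) <| by
    rw [count_false_add_count_true, h.2, count_false_add_count_true, h.1]

lemma above_wsub_and_below_wsub (hST : BalancedBits S T) (hA : Above S x y) (hB : Below T x y) :
    Above (wsub S) (2 * x + y + 1) (x + y) ∧ Below (wsub T) (2 * x + y + 1) (x + y) :=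
  ⟨hA.to_wsub hB.nonneg (hST.2 ▸ hB.lt_count_true),
    hB.to_wsub hA.nonneg (hST.count_false_eq ▸ hA.lt_count_false)⟩

lemma between_iff_between_wsub (hST : BalancedBits S T) (x y : ℤ) :
    Between S T x y ↔ Between (wsub S) (wsub T) (2 * x + y + 1) (x + y) := by
  constructor
  · rintro (⟨hA, hB⟩ | ⟨hB, hA⟩)
    · exact .inl (above_wsub_and_below_wsub hST hA hB)
    · exact .inr (above_wsub_and_below_wsub hST.symm hA hB).symm
  · rintro (⟨hA, hB⟩ | ⟨hB, hA⟩)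
    · exact .inl ⟨hA.of_wsub, hB.of_wsub⟩
    · exact .inr ⟨hB.of_wsub, hA.of_wsub⟩

end

/-- `(x, y)` is between `S` and `T` iff `(2x + y + 1, x + y)` is between
`w(S)` and `w(T)`; consequently the area between `w(S)` and `w(T)` equals the
area between `S` and `T`. -/
theorem between_iff_and_area_preserved (S T : List Bool) (hbal : BalancedBits S T) :
    (∀ x y : ℤ, Between S T x y ↔ Between (wsub S) (wsub T) (2 * x + y + 1) (x + y)) ∧
    {p : ℤ × ℤ | Between (wsub S) (wsub T) p.1 p.2}.ncard =
      {p : ℤ × ℤ | Between S T p.1 p.2}.ncard := by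
  refine ⟨between_iff_between_wsub hbal, ?_⟩
  let φ : ℤ × ℤ → ℤ × ℤ := fun p => (2 * p.1 + p.2 + 1, p.1 + p.2)
  have hφ : φ.Bijective := by
    refine ⟨fun p q hpq => ?_, fun q => ⟨(q.1 - q.2 - 1, 2 * q.2 - q.1 + 1), ?_⟩⟩
    · simp only [φ, Prod.mk.injEq] at hpq
      ext <;> omega
    · ext <;> simp only [φ] <;> ring
  have hset : {p : ℤ × ℤ | Between S T p.1 p.2} =
      φ ⁻¹' {p : ℤ × ℤ | Between (wsub S) (wsub T) p.1 p.2} :=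
    Set.ext fun p => between_iff_between_wsub hbal p.1 p.2
  rw [hset, Set.ncard_preimage_of_injective_subset_range hφ.injective
    (by simp [hφ.surjective.range_eq])]
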